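/- Decay of the kernel H_α: let α > 0 and for x ∈ ℝ and y ∈ ℝ with y ≠ 0 define H(x,y) := ∫_ℝ sgn(ξ)·(1+|ξ|^α)^{−1/2}·exp(i x ξ − |ξ|·(1+|ξ|^α)^{1/2}·|y|) dξ (the integral converges absolutely for y ≠ 0). Then there exists a constant C > 0, depending only on α, such that |H(x,y)| ≤ C/(x² + y²)^{1/2} for all x ∈ ℝ and all y ≠ 0. -/

import Mathlib

open MeasureTheory

noncomputable section

/-- The kernel `H(x,y) = ∫_ℝ sgn(ξ) (1+|ξ|^α)^{-1/2} e^{ixξ - |ξ|(1+|ξ|^α)^{1/2}|y|} dξ`,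
defined for `y ≠ 0` (the integral converges absolutely there). -/
def Hker (α x y : ℝ) : ℂ :=
  ∫ ξ : ℝ, ((Real.sign ξ * (1 + |ξ| ^ α) ^ (-((1 : ℝ) / 2)) : ℝ) : ℂ)
    * Complex.exp (Complex.I * ((x * ξ : ℝ) : ℂ)
        - ((|ξ| * (1 + |ξ| ^ α) ^ ((1 : ℝ) / 2) * |y| : ℝ) : ℂ))

/-! With the profile `ψ_b(t) = (1 + t^α)^{-1/2} exp(-t (1 + t^α)^{1/2} b)` the integrand of `H` is
`sgn(ξ) ψ_{|y|}(|ξ|) e^{ixξ}`, whose amplitude is odd in `ξ`, so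
`H(x,y) = 2i ∫₀^∞ ψ_{|y|}(t) sin(xt) dt`. The profile is nonnegative, decreasing, equal to `1`
at `0` and bounded by `exp(-bt)`. The exponential bound gives `|H| ≤ 2/|y|`. Integrating by parts
against the primitive `-cos(xt)/x`, which is bounded by `1/|x|`, while the decreasing profile has
total variation `1`, gives `|H| ≤ 4/|x|`. Hence `|H| (x² + y²)^{1/2} ≤ |H| (|x| + |y|) ≤ 6`. -/

open Set

theorem abs_intervalIntegral_mul_le_of_antitoneOn {φ φ' G g : ℝ → ℝ} {a b M : ℝ} (hab : a ≤ b)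
    (hφc : ContinuousOn φ (Icc a b)) (hφ : ∀ t ∈ Ioo a b, HasDerivAt φ (φ' t) t)
    (hanti : AntitoneOn φ (Icc a b)) (hφb : 0 ≤ φ b)
    (hGc : ContinuousOn G (Icc a b)) (hG : ∀ t ∈ Ioo a b, HasDerivAt G (g t) t)
    (hg : IntervalIntegrable g volume a b) (hGM : ∀ t ∈ Icc a b, |G t| ≤ M) :
    |∫ t in a..b, φ t * g t| ≤ 2 * φ a * M := by
  have hφ'_nonpos : ∀ t ∈ Ioo a b, φ' t ≤ 0 := fun t ht =>
    (hφ t ht).hasDerivWithinAt.nonpos_of_antitoneOn (isOpen_Ioo.preperfect t ht)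
      (hanti.mono Ioo_subset_Icc_self)
  have hφ'_int : IntervalIntegrable φ' volume a b := by
    have h := intervalIntegral.integrableOn_deriv_of_nonneg (g := fun t => -φ t)
      (g' := fun t => -φ' t) hφc.neg (fun t ht => (hφ t ht).neg)
      (fun t ht => neg_nonneg.2 (hφ'_nonpos t ht))
    exact (intervalIntegrable_iff_integrableOn_Ioc_of_le hab).2 (by simpa using h.neg)
  have hIBP := intervalIntegral.integral_mul_deriv_eq_deriv_mul_of_hasDerivAt (u := φ) (v := G)
    (by rwa [uIcc_of_le hab]) (by rwa [uIcc_of_le hab]) (by simpa [hab] using hφ)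
    (by simpa [hab] using hG) hφ'_int hg
  have hab' : a ∈ Icc a b := left_mem_Icc.2 hab
  have hba : b ∈ Icc a b := right_mem_Icc.2 hab
  have hφa : φ b ≤ φ a := hanti hab' hba hab
  have hrem : |∫ t in a..b, φ' t * G t| ≤ (φ a - φ b) * M := calc
    |∫ t in a..b, φ' t * G t| ≤ ∫ t in a..b, |φ' t * G t| :=
      intervalIntegral.abs_integral_le_integral_abs hab
    _ ≤ ∫ t in a..b, -φ' t * M := by
      refine intervalIntegral.integral_mono_on_of_le_Ioo hab ?_ ?_ fun t ht => ?_
      · exact (hφ'_int.mul_continuousOn (by rwa [uIcc_of_le hab])).abs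
      · exact hφ'_int.neg.mul_const M
      · rw [abs_mul, abs_of_nonpos (hφ'_nonpos t ht)]
        exact mul_le_mul_of_nonneg_left (hGM t (Ioo_subset_Icc_self ht))
          (neg_nonneg.2 (hφ'_nonpos t ht))
    _ = (φ a - φ b) * M := by
      rw [intervalIntegral.integral_mul_const, intervalIntegral.integral_neg,
        intervalIntegral.integral_eq_sub_of_hasDerivAt_of_le hab hφc hφ hφ'_int]
      ring
  have hφbG : |φ b * G b| ≤ φ b * M := by
    rw [abs_mul, abs_of_nonneg hφb]; exact mul_le_mul_of_nonneg_left (hGM b hba) hφb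
  have hφaG : |φ a * G a| ≤ φ a * M := by
    rw [abs_mul, abs_of_nonneg (hφb.trans hφa)]
    exact mul_le_mul_of_nonneg_left (hGM a hab') (hφb.trans hφa)
  rw [hIBP]
  calc |φ b * G b - φ a * G a - ∫ t in a..b, φ' t * G t|
      ≤ |φ b * G b| + |φ a * G a| + |∫ t in a..b, φ' t * G t| :=
        (abs_sub _ _).trans (add_le_add_left (abs_sub _ _) _)
    _ ≤ φ b * M + φ a * M + (φ a - φ b) * M := by gcongr
    _ = 2 * φ a * M := by ring

theorem abs_intervalIntegral_mul_sin_le_of_antitoneOn {φ : ℝ → ℝ} {a b x : ℝ} (hx : x ≠ 0)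
    (hab : a ≤ b) (hφc : ContinuousOn φ (Icc a b)) (hφd : ∀ t ∈ Ioo a b, DifferentiableAt ℝ φ t)
    (hanti : AntitoneOn φ (Icc a b)) (hφb : 0 ≤ φ b) :
    |∫ t in a..b, φ t * Real.sin (x * t)| ≤ 2 * φ a / |x| := by
  have hG : ∀ t, HasDerivAt (fun s => -Real.cos (x * s) / x) (Real.sin (x * t)) t := fun t => by
    simpa [mul_div_cancel_left₀ _ hx, mul_comm] using
      (((hasDerivAt_id t).const_mul x).cos.neg).div_const x
  have hGM : ∀ t, |-Real.cos (x * t) / x| ≤ 1 / |x| := fun t => by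
    rw [abs_div, abs_neg]; gcongr; exact Real.abs_cos_le_one _
  have h := abs_intervalIntegral_mul_le_of_antitoneOn hab hφc
    (fun t ht => (hφd t ht).hasDerivAt) hanti hφb (by fun_prop) (fun t _ => hG t)
    (by apply Continuous.intervalIntegrable; fun_prop) (fun t _ => hGM t)
  rwa [mul_one_div] at h

theorem abs_integral_Ioi_mul_sin_mul_abs_le_of_antitoneOn {φ : ℝ → ℝ} {a : ℝ} (x : ℝ)
    (hφc : ContinuousOn φ (Ici a)) (hφd : ∀ t ∈ Ioi a, DifferentiableAt ℝ φ t)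
    (hanti : AntitoneOn φ (Ici a)) (hφ_nonneg : ∀ t ∈ Ici a, 0 ≤ φ t)
    (hφi : IntegrableOn φ (Ioi a)) :
    |∫ t in Ioi a, φ t * Real.sin (x * t)| * |x| ≤ 2 * φ a := by
  rcases eq_or_ne x 0 with rfl | hx
  · simpa using hφ_nonneg a self_mem_Ici
  have hint : IntegrableOn (fun t => φ t * Real.sin (x * t)) (Ioi a) :=
    hφi.mul_bdd (by fun_prop) (ae_of_all _ fun t => Real.abs_sin_le_one _)
  have hlim := (intervalIntegral_tendsto_integral_Ioi a hint Filter.tendsto_id).abs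
  rw [← le_div_iff₀ (abs_pos.2 hx)]
  refine le_of_tendsto hlim (Filter.eventually_ge_atTop a |>.mono fun b hab => ?_)
  exact abs_intervalIntegral_mul_sin_le_of_antitoneOn hx hab (hφc.mono Icc_subset_Ici_self)
    (fun t ht => hφd t ht.1) (hanti.mono Icc_subset_Ici_self) (hφ_nonneg b hab)

theorem abs_integral_Ioi_mul_sin_mul_le_of_abs_le_exp {φ : ℝ → ℝ} {b : ℝ} (x : ℝ) (hb : 0 < b)
    (hφ : ∀ t ∈ Ioi 0, |φ t| ≤ Real.exp (-b * t)) :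
    |∫ t in Ioi 0, φ t * Real.sin (x * t)| * b ≤ 1 := by
  have h := norm_integral_le_of_norm_le (exp_neg_integrableOn_Ioi 0 hb)
    ((ae_restrict_iff' measurableSet_Ioi).2 <| ae_of_all _ fun t ht => by
      rw [norm_mul, Real.norm_eq_abs, Real.norm_eq_abs]
      exact (mul_le_of_le_one_right (abs_nonneg _) (Real.abs_sin_le_one _)).trans (hφ t ht))
    (f := fun t => φ t * Real.sin (x * t))
  rw [integral_exp_mul_Ioi (neg_lt_zero.2 hb), mul_zero, Real.exp_zero, neg_div_neg_eq,
    Real.norm_eq_abs] at h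
  rwa [← le_div_iff₀ hb]

lemma one_le_one_add_rpow {t : ℝ} (α : ℝ) (ht : 0 ≤ t) : 1 ≤ 1 + t ^ α :=
  le_add_of_nonneg_right (Real.rpow_nonneg ht α)

def hkerProfile (α b t : ℝ) : ℝ :=
  (1 + t ^ α) ^ (-((1 : ℝ) / 2)) * Real.exp (-(t * (1 + t ^ α) ^ ((1 : ℝ) / 2) * b))

namespace hkerProfile

variable {α b t : ℝ}

lemma nonneg (ht : 0 ≤ t) : 0 ≤ hkerProfile α b t := by
  unfold hkerProfile; positivity

lemma apply_zero (hα : α ≠ 0) : hkerProfile α b 0 = 1 := by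
  simp [hkerProfile, Real.zero_rpow hα]

lemma le_exp (hb : 0 ≤ b) (ht : 0 ≤ t) : hkerProfile α b t ≤ Real.exp (-b * t) := by
  have hw := one_le_one_add_rpow α ht
  calc hkerProfile α b t ≤ 1 * Real.exp (-b * t) := by
        unfold hkerProfile
        gcongr
        · exact Real.rpow_le_one_of_one_le_of_nonpos hw (by norm_num)
        · have := Real.one_le_rpow hw (by norm_num : (0:ℝ) ≤ 1 / 2)
          nlinarith [mul_nonneg ht hb]
    _ = Real.exp (-b * t) := one_mul _

lemma antitoneOn (hα : 0 ≤ α) (hb : 0 ≤ b) : AntitoneOn (hkerProfile α b) (Ici 0) := by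
  intro s hs t ht hst
  have hw : 1 + s ^ α ≤ 1 + t ^ α := by gcongr
  have hw0 : 0 < 1 + s ^ α := by linarith [one_le_one_add_rpow α (mem_Ici.1 hs)]
  unfold hkerProfile
  gcongr ?_ * Real.exp ?_
  · exact Real.rpow_le_rpow_of_nonpos hw0 hw (by norm_num)
  · have := mem_Ici.1 hs
    gcongr

lemma continuousOn (hα : 0 < α) : ContinuousOn (hkerProfile α b) (Ici 0) := by
  have hw : ContinuousOn (fun t : ℝ => 1 + t ^ α) (Ici 0) :=
    (continuous_const.add (Real.continuous_rpow_const hα.le)).continuousOn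
  have hhalf : ∀ t ∈ Ici (0:ℝ), 1 + t ^ α ≠ 0 ∨ 0 ≤ (1:ℝ) / 2 := fun t _ => Or.inr (by norm_num)
  have hneg_half : ∀ t ∈ Ici (0:ℝ), 1 + t ^ α ≠ 0 ∨ 0 ≤ -((1:ℝ) / 2) := fun t ht =>
    Or.inl (zero_lt_one.trans_le (one_le_one_add_rpow α ht)).ne'
  exact (hw.rpow_const hneg_half).mul (continuousOn_id.mul (hw.rpow_const hhalf) |>.mul
    continuousOn_const |>.neg.rexp)

lemma differentiableAt (ht : 0 < t) : DifferentiableAt ℝ (hkerProfile α b) t := by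
  have hw0 : 1 + t ^ α ≠ 0 := (zero_lt_one.trans_le (one_le_one_add_rpow α ht.le)).ne'
  unfold hkerProfile
  fun_prop (disch := first | exact Or.inl hw0 | exact Or.inl ht.ne')

lemma integrableOn_Ioi (hα : 0 < α) (hb : 0 < b) : IntegrableOn (hkerProfile α b) (Ioi 0) :=
  (exp_neg_integrableOn_Ioi 0 hb).mono' ((continuousOn hα).mono Ioi_subset_Ici_self
    |>.aestronglyMeasurable measurableSet_Ioi)
    ((ae_restrict_iff' measurableSet_Ioi).2 <| ae_of_all _ fun t (ht : 0 < t) => by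
      rw [Real.norm_of_nonneg (nonneg ht.le)]; exact le_exp hb.le ht.le)

end hkerProfile

theorem integral_sign_mul_comp_abs_mul_cexp_I_mul (ψ : ℝ → ℝ) (x : ℝ)
    (hψ : IntegrableOn ψ (Ioi 0)) :
    ∫ ξ : ℝ, ((Real.sign ξ * ψ |ξ| : ℝ) : ℂ) * Complex.exp (Complex.I * ((x * ξ : ℝ) : ℂ))
      = 2 * Complex.I * ((∫ ξ in Ioi 0, ψ ξ * Real.sin (x * ξ) : ℝ) : ℂ) := by
  set f : ℝ → ℂ := fun ξ =>
    ((Real.sign ξ * ψ |ξ| : ℝ) : ℂ) * Complex.exp (Complex.I * ((x * ξ : ℝ) : ℂ))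
  have hwave : ∀ s : ℝ, IntegrableOn
      (fun ξ => (ψ ξ : ℂ) * Complex.exp (Complex.I * ((s * ξ : ℝ) : ℂ))) (Ioi 0) := fun s =>
    hψ.ofReal.mul_bdd (by fun_prop)
      (ae_of_all _ fun ξ => (Complex.norm_exp_I_mul_ofReal _).le)
  have hright : ∀ ξ ∈ Ioi (0:ℝ),
      f ξ = (ψ ξ : ℂ) * Complex.exp (Complex.I * ((x * ξ : ℝ) : ℂ)) := fun ξ (hξ : 0 < ξ) => by
    simp [f, Real.sign_of_pos hξ, abs_of_pos hξ]
  have hleft : ∀ ξ ∈ Ioi (0:ℝ),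
      f (-ξ) = -((ψ ξ : ℂ) * Complex.exp (Complex.I * ((-x * ξ : ℝ) : ℂ))) :=
    fun ξ (hξ : 0 < ξ) => by
      simp [f, Real.sign_of_neg (neg_neg_of_pos hξ), abs_of_pos hξ]
  have hIoi : IntegrableOn f (Ioi 0) := (hwave x).congr_fun (fun ξ hξ => (hright ξ hξ).symm)
    measurableSet_Ioi
  have hIoi_neg : IntegrableOn (fun ξ => f (-ξ)) (Ioi 0) :=
    (hwave (-x)).neg.congr_fun (fun ξ hξ => (hleft ξ hξ).symm) measurableSet_Ioi
  have hIic : IntegrableOn f (Iic 0) := by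
    rwa [← (Measure.measurePreserving_neg volume).integrableOn_comp_preimage
      measurableEmbedding_neg, neg_preimage, neg_Iic, neg_zero,
      integrableOn_Ici_iff_integrableOn_Ioi]
  have hsum : ∀ ξ ∈ Ioi (0:ℝ),
      f (-ξ) + f ξ = 2 * Complex.I * ((ψ ξ * Real.sin (x * ξ) : ℝ) : ℂ) := fun ξ hξ => by
    rw [hleft ξ hξ, hright ξ hξ]
    push_cast
    rw [mul_comm Complex.I, mul_comm Complex.I, Complex.exp_mul_I, Complex.exp_mul_I]
    simp only [neg_mul, Complex.cos_neg, Complex.sin_neg]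
    ring
  calc ∫ ξ, f ξ = (∫ ξ in Iic 0, f ξ) + ∫ ξ in Ioi 0, f ξ :=
        (intervalIntegral.integral_Iic_add_Ioi hIic hIoi).symm
    _ = ∫ ξ in Ioi 0, (f (-ξ) + f ξ) := by
        rw [integral_add hIoi_neg hIoi, integral_comp_neg_Ioi, neg_zero]
    _ = 2 * Complex.I * ((∫ ξ in Ioi 0, ψ ξ * Real.sin (x * ξ) : ℝ) : ℂ) := by
        rw [setIntegral_congr_fun measurableSet_Ioi hsum, integral_const_mul,
          integral_complex_ofReal]

theorem Hker_eq_integral_sign_mul_hkerProfile (α x y : ℝ) :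
    Hker α x y = ∫ ξ : ℝ, ((Real.sign ξ * hkerProfile α |y| |ξ| : ℝ) : ℂ)
      * Complex.exp (Complex.I * ((x * ξ : ℝ) : ℂ)) := by
  unfold Hker hkerProfile
  congr 1 with ξ
  rw [sub_eq_add_neg, Complex.exp_add, ← Complex.ofReal_neg, ← Complex.ofReal_exp]
  push_cast
  ring

/-- **Decay of the kernel `H_α`** (Lemma 3.8 (b)): for `α > 0` there is `C > 0`, depending
only on `α`, with `|H(x,y)| ≤ C/(x²+y²)^{1/2}` for all `x ∈ ℝ` and `y ≠ 0`. -/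
theorem Hker_linear_decay (α : ℝ) (hα : 0 < α) :
    ∃ C : ℝ, 0 < C ∧ ∀ x y : ℝ, y ≠ 0 →
      ‖Hker α x y‖ ≤ C / (x ^ 2 + y ^ 2) ^ ((1 : ℝ) / 2) := by
  refine ⟨6, by norm_num, fun x y hy => ?_⟩
  have hb : 0 < |y| := abs_pos.2 hy
  have hint := hkerProfile.integrableOn_Ioi (b := |y|) hα hb
  set A := ∫ ξ in Ioi 0, hkerProfile α |y| ξ * Real.sin (x * ξ)
  have hH : ‖Hker α x y‖ = 2 * |A| := by
    rw [Hker_eq_integral_sign_mul_hkerProfile, integral_sign_mul_comp_abs_mul_cexp_I_mul _ _ hint]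
    simp [A]
  have hAx : |A| * |x| ≤ 2 := by
    simpa [hkerProfile.apply_zero hα.ne'] using
      abs_integral_Ioi_mul_sin_mul_abs_le_of_antitoneOn x (hkerProfile.continuousOn hα)
        (fun t ht => hkerProfile.differentiableAt ht) (hkerProfile.antitoneOn hα.le hb.le)
        (fun t ht => hkerProfile.nonneg ht) hint
  have hAy : |A| * |y| ≤ 1 :=
    abs_integral_Ioi_mul_sin_mul_le_of_abs_le_exp x hb fun t (ht : 0 < t) => by
      rw [abs_of_nonneg (hkerProfile.nonneg ht.le)]
      exact hkerProfile.le_exp hb.le ht.le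
  have hr : 0 < (x ^ 2 + y ^ 2) ^ ((1 : ℝ) / 2) := by positivity
  have hle : (x ^ 2 + y ^ 2) ^ ((1 : ℝ) / 2) ≤ |x| + |y| := by
    rw [← Real.sqrt_eq_rpow, Real.sqrt_le_iff]
    exact ⟨by positivity, by nlinarith [sq_abs x, sq_abs y, abs_nonneg x, abs_nonneg y]⟩
  rw [le_div_iff₀ hr, hH]
  calc 2 * |A| * (x ^ 2 + y ^ 2) ^ ((1 : ℝ) / 2) ≤ 2 * |A| * (|x| + |y|) := by gcongr
    _ = 2 * (|A| * |x| + |A| * |y|) := by ring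
    _ ≤ 6 := by linarith
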